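/- Let (ψ_I)_{I∈𝒟} be an orthonormal wavelet system indexed by dyadic intervals, f ∈ BMO(ℝ) (with BMO norm characterized by ‖f‖_{BMO}² = sup_Q |Q|^{-1} Σ_{I⊆Q} |⟨f,ψ_I⟩|²), Q an interval, k ∈ ℤ, n ≥ 1. Then Σ_{I⊆Q, I dyadic} |Σ_{J∈I_{k,n}} ⟨f,ψ_J⟩|² ≲ 2^{|k|}(log(n+1) + max(-k,0) + 1) ‖f‖_{BMO}² |Q|, where I_{k,n} is the family of dyadic intervals J with |I| = 2^k|J| and n ≤ rdist(I,J) < n+1. -/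

import Mathlib

/-- Length of a dyadic interval of scale `j`. -/
noncomputable def dLen (j : ℤ) : ℝ := (2 : ℝ) ^ (-j)

/-- The dyadic interval indexed by `p = (j,k)`, namely `2^{-j}[k,k+1]`. -/
noncomputable def dIcc (p : ℤ × ℤ) : Set ℝ :=
  Set.Icc ((p.2 : ℝ) * dLen p.1) (((p.2 : ℝ) + 1) * dLen p.1)

/-- Relative distance `rdist(I,J) = diam(I∪J)/max(|I|,|J|)` between dyadic intervals. -/
noncomputable def dRdist (p q : ℤ × ℤ) : ℝ :=
  (max (((p.2 : ℝ) + 1) * dLen p.1) (((q.2 : ℝ) + 1) * dLen q.1)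
      - min ((p.2 : ℝ) * dLen p.1) ((q.2 : ℝ) * dLen q.1)) / max (dLen p.1) (dLen q.1)

/-!
Cauchy–Schwarz bounds each inner square by `#I_{k,n}(I) · Σ_J a_J²`, and
`#I_{k,n}(I) ≤ 6·2^{max(k,0)}` because an endpoint of `J` is confined to one of two windows of
length `2 max(|I|,|J|)`; symmetrically every `J` lies in at most `6·2^{max(-k,0)}` of the families
`I_{k,n}(I)`. If `(n+1) max(|I|,|J|) ≤ |Q|`, all `J ∈ I_{k,n}(I)` lie in `3Q`, so double counting
and the BMO condition on `3Q` bound these terms by `O(2^{|k|}) B²|Q|`. The remaining `I ⊆ Q`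
occupy at most `log₂((n+1)·2^{max(-k,0)}) + 1` scales; there `a_J² ≤ B²|J|` bounds each term by
`O(2^{|k|}) B²|I|`, and the `I ⊆ Q` of one scale have total length at most `|Q|`.
-/
open Set Real
open scoped ENNReal

noncomputable def dLeft (p : ℤ × ℤ) : ℝ := p.2 * dLen p.1

noncomputable def dRight (p : ℤ × ℤ) : ℝ := (p.2 + 1) * dLen p.1

lemma dLen_pos (j : ℤ) : 0 < dLen j := zpow_pos two_pos _

lemma logb_two_dLen (j : ℤ) : logb 2 (dLen j) = -j := by
  rw [dLen, ← rpow_intCast, logb_rpow two_pos (by norm_num), Int.cast_neg]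

lemma dLen_anti {i j : ℤ} (h : i ≤ j) : dLen j ≤ dLen i :=
  zpow_le_zpow_right₀ one_le_two (neg_le_neg h)

lemma max_dLen_div_dLen (i j : ℤ) : max (dLen i) (dLen j) / dLen j = 2 ^ (j - i).toNat := by
  rcases le_total i j with h | h
  · rw [max_eq_left (dLen_anti h), dLen, dLen, ← zpow_sub₀ two_ne_zero, ← zpow_natCast,
      Int.toNat_of_nonneg (by omega)]
    congr 1; ring
  · rw [max_eq_right (dLen_anti h), div_self (dLen_pos j).ne', Int.toNat_of_nonpos (by omega),
      pow_zero]

lemma max_dLen_dLen_add (j k : ℤ) : max (dLen j) (dLen (j + k)) = 2 ^ (-k).toNat * dLen j := by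
  rw [max_comm, ← div_mul_cancel₀ (max _ _) (dLen_pos j).ne', max_dLen_div_dLen]
  congr 3
  ring

lemma two_pow_toNat_mul_two_pow_toNat (k : ℤ) :
    (2 : ℝ) ^ k.toNat * 2 ^ (-k).toNat = 2 ^ |k| := by
  rw [← pow_add, ← zpow_natCast]
  congr 1
  rcases abs_cases k with ⟨h, _⟩ | ⟨h, _⟩ <;> omega

lemma two_pow_toNat_sq_mul_dLen_add (j k : ℤ) :
    (2 : ℝ) ^ k.toNat * 2 ^ k.toNat * dLen (j + k) = 2 ^ |k| * dLen j := by
  rw [dLen, dLen, ← zpow_natCast, ← zpow_add₀ two_ne_zero, ← zpow_add₀ two_ne_zero,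
    ← zpow_add₀ two_ne_zero]
  congr 1
  rcases abs_cases k with ⟨h, _⟩ | ⟨h, _⟩ <;> omega

lemma dRight_sub_dLeft (p : ℤ × ℤ) : dRight p - dLeft p = dLen p.1 := by
  rw [dRight, dLeft]; ring

lemma dLeft_lt_dRight (p : ℤ × ℤ) : dLeft p < dRight p := by
  linarith [dRight_sub_dLeft p, dLen_pos p.1]

lemma dIcc_subset_Icc_iff {p : ℤ × ℤ} {u v : ℝ} :
    dIcc p ⊆ Icc u v ↔ u ≤ dLeft p ∧ dRight p ≤ v :=
  Icc_subset_Icc_iff (dLeft_lt_dRight p).le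

lemma dRdist_comm (p q : ℤ × ℤ) : dRdist p q = dRdist q p := by
  rw [dRdist, dRdist, max_comm, min_comm, max_comm (dLen p.1)]

lemma dRdist_eq (p q : ℤ × ℤ) : dRdist p q =
    (max (dRight p) (dRight q) - min (dLeft p) (dLeft q)) / max (dLen p.1) (dLen q.1) := rfl

lemma sub_dLeft_lt_of_dRdist_lt {p q : ℤ × ℤ} {r : ℝ} (h : dRdist p q < r) :
    dRight p - dLeft q < r * max (dLen p.1) (dLen q.1) ∧
      dRight q - dLeft p < r * max (dLen p.1) (dLen q.1) := by
  rw [dRdist_eq, div_lt_iff₀ (lt_max_of_lt_left (dLen_pos p.1))] at h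
  constructor <;> linarith [le_max_left (dRight p) (dRight q), le_max_right (dRight p) (dRight q),
    min_le_left (dLeft p) (dLeft q), min_le_right (dLeft p) (dLeft q)]

lemma le_max_sub_dLeft_of_le_dRdist {p q : ℤ × ℤ} {r : ℝ} (h : r ≤ dRdist p q) :
    (r - 1) * max (dLen p.1) (dLen q.1) ≤ max (dRight p - dLeft q) (dRight q - dLeft p) := by
  rw [dRdist_eq, le_div_iff₀ (lt_max_of_lt_left (dLen_pos p.1))] at h
  have hp := dRight_sub_dLeft p
  have hq := dRight_sub_dLeft q
  have h₁ := le_max_left (dRight p - dLeft q) (dRight q - dLeft p)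
  have h₂ := le_max_right (dRight p - dLeft q) (dRight q - dLeft p)
  have h₃ := le_max_left (dLen p.1) (dLen q.1)
  have h₄ := le_max_right (dLen p.1) (dLen q.1)
  rcases max_cases (dRight p) (dRight q) with ⟨e₁, _⟩ | ⟨e₁, _⟩ <;>
    rcases min_cases (dLeft p) (dLeft q) with ⟨e₂, _⟩ | ⟨e₂, _⟩ <;>
    rw [e₁, e₂] at h <;> linarith [dLen_pos p.1, dLen_pos q.1]

lemma dIcc_subset_of_dRdist_lt {p q : ℤ × ℤ} {r : ℝ} (h : dRdist p q < r) :
    dIcc q ⊆ Icc (dRight p - r * max (dLen p.1) (dLen q.1))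
      (dLeft p + r * max (dLen p.1) (dLen q.1)) := by
  obtain ⟨h₁, h₂⟩ := sub_dLeft_lt_of_dRdist_lt h
  exact dIcc_subset_Icc_iff.2 ⟨by linarith, by linarith⟩

lemma card_Icc_ceil_floor_le {α β : ℝ} (h : α ≤ β + 1) :
    ((Finset.Icc ⌈α⌉ ⌊β⌋).card : ℝ) ≤ β - α + 1 := by
  rw [Int.card_Icc]
  rcases le_total (⌊β⌋ + 1 - ⌈α⌉) 0 with h' | h'
  · rw [Int.toNat_of_nonpos h', Nat.cast_zero]
    linarith
  · rw [← Int.cast_natCast, Int.toNat_of_nonneg h']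
    push_cast
    linarith [Int.floor_le β, Int.le_ceil α]

lemma mem_Icc_ceil_div_floor_div {s α β : ℝ} (hs : 0 < s) {t : ℤ} (h₁ : α ≤ t * s)
    (h₂ : t * s ≤ β) : t ∈ Finset.Icc ⌈α / s⌉ ⌊β / s⌋ := by
  rw [Finset.mem_Icc, Int.ceil_le, Int.le_floor]
  exact ⟨(div_le_iff₀ hs).2 h₁, (le_div_iff₀ hs).2 h₂⟩

/-- Scale `j` means length `2^{-j}`, so `rdistShell n I (scale I + k)` is the family `I_{k,n}`
attached to `I`, the `J` with `|I| = 2^k |J|` and `n ≤ rdist(I,J) < n+1`. -/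
def rdistShell (r : ℝ) (b : ℤ × ℤ) (j : ℤ) : Set (ℤ × ℤ) :=
  {q | q.1 = j ∧ r ≤ dRdist b q ∧ dRdist b q < r + 1}

lemma encard_rdistShell_le (r : ℝ) (b : ℤ × ℤ) (j : ℤ) :
    (rdistShell r b j).encard ≤ (6 * 2 ^ (j - b.1).toNat : ℕ) := by
  set s := dLen j
  set M := max (dLen b.1) (dLen j)
  have hs : 0 < s := dLen_pos j
  have hsM : s ≤ M := le_max_right _ _
  -- `W₁`: left endpoints `t s` of `J` with `dRight b - t s ∈ [(r-1)M, (r+1)M)`;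
  -- `W₂`: those with `(t+1) s - dLeft b` in that range.
  set W₁ := Finset.Icc ⌈(dRight b - (r + 1) * M) / s⌉ ⌊(dRight b - (r - 1) * M) / s⌋
  set W₂ := Finset.Icc ⌈(dLeft b + (r - 1) * M - s) / s⌉ ⌊(dLeft b + (r + 1) * M - s) / s⌋
  have hsub : rdistShell r b j ⊆ (fun t => (j, t)) '' ↑(W₁ ∪ W₂) := by
    rintro ⟨j', t⟩ ⟨rfl, h₁, h₂⟩
    refine ⟨t, ?_, rfl⟩
    have hL : dLeft (j', t) = t * s := rfl
    have hR : dRight (j', t) = t * s + s := by simp only [dRight]; ring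
    have h₃ : dRight b - t * s < (r + 1) * M := hL ▸ (sub_dLeft_lt_of_dRdist_lt h₂).1
    have h₄ : t * s + s - dLeft b < (r + 1) * M := hR ▸ (sub_dLeft_lt_of_dRdist_lt h₂).2
    have h₅ : (r - 1) * M ≤ max (dRight b - t * s) (t * s + s - dLeft b) :=
      hL ▸ hR ▸ le_max_sub_dLeft_of_le_dRdist h₁
    rw [Finset.coe_union, mem_union, Finset.mem_coe, Finset.mem_coe]
    rcases le_max_iff.1 h₅ with h | h
    · exact Or.inl (mem_Icc_ceil_div_floor_div hs (by linarith) (by linarith))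
    · exact Or.inr (mem_Icc_ceil_div_floor_div hs (by linarith) (by linarith))
  have hM : 0 ≤ M := hs.le.trans hsM
  have hcard : ((W₁ ∪ W₂).card : ℝ) ≤ 6 * 2 ^ (j - b.1).toNat := by
    have h₁ := card_Icc_ceil_floor_le (α := (dRight b - (r + 1) * M) / s)
      (β := (dRight b - (r - 1) * M) / s)
      (by linarith [div_le_div_of_nonneg_right (by linarith : dRight b - (r + 1) * M ≤
        dRight b - (r - 1) * M) hs.le])
    have h₂ := card_Icc_ceil_floor_le (α := (dLeft b + (r - 1) * M - s) / s)
      (β := (dLeft b + (r + 1) * M - s) / s)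
      (by linarith [div_le_div_of_nonneg_right (by linarith : dLeft b + (r - 1) * M - s ≤
        dLeft b + (r + 1) * M - s) hs.le])
    rw [← max_dLen_div_dLen]
    calc ((W₁ ∪ W₂).card : ℝ) ≤ W₁.card + W₂.card := by exact_mod_cast Finset.card_union_le _ _
      _ ≤ (2 * M / s + 1) + (2 * M / s + 1) := by
        refine add_le_add (h₁.trans_eq ?_) (h₂.trans_eq ?_) <;> ring
      _ ≤ 6 * (M / s) := by linarith [(one_le_div hs).2 hsM, mul_div_assoc 2 M s]
  calc (rdistShell r b j).encard ≤ ((fun t => (j, t)) '' ↑(W₁ ∪ W₂)).encard := encard_le_encard hsub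
    _ ≤ (↑(W₁ ∪ W₂) : Set ℤ).encard := encard_image_le _ _
    _ = (W₁ ∪ W₂).card := encard_coe_eq_coe_finsetCard _
    _ ≤ _ := Nat.cast_le.2 (by exact_mod_cast hcard)

lemma setOf_mem_rdistShell (r : ℝ) (k : ℤ) (q : ℤ × ℤ) :
    {p | q ∈ rdistShell r p (p.1 + k)} = rdistShell r q (q.1 - k) := by
  ext p
  simp only [rdistShell, mem_ofPred_eq, dRdist_comm p q]
  constructor <;> rintro ⟨h, h'⟩ <;> exact ⟨by omega, h'⟩

lemma encard_dIcc_subset_le (j : ℤ) {u v : ℝ} (huv : u ≤ v) :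
    ({p : ℤ × ℤ | p.1 = j ∧ dIcc p ⊆ Icc u v}.encard : ℝ≥0∞) ≤
      ENNReal.ofReal ((v - u) / dLen j) := by
  set s := dLen j
  have hs : 0 < s := dLen_pos j
  set W := Finset.Icc ⌈u / s⌉ ⌊(v - s) / s⌋
  have hsub : {p : ℤ × ℤ | p.1 = j ∧ dIcc p ⊆ Icc u v} ⊆ (fun t => (j, t)) '' ↑W := by
    rintro ⟨j', t⟩ ⟨rfl, hp⟩
    obtain ⟨h₁, h₂⟩ := dIcc_subset_Icc_iff.1 hp
    have hR : dRight (j', t) = t * s + s := by simp only [dRight]; ring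
    exact ⟨t, mem_Icc_ceil_div_floor_div hs h₁ (by linarith), rfl⟩
  have hcard : (W.card : ℝ) ≤ (v - u) / s := by
    have h := card_Icc_ceil_floor_le (α := u / s) (β := (v - s) / s)
      (by rw [sub_div, div_self hs.ne']; linarith [div_le_div_of_nonneg_right huv hs.le])
    calc (W.card : ℝ) ≤ (v - s) / s - u / s + 1 := h
      _ = (v - u) / s := by field_simp; ring
  calc ({p : ℤ × ℤ | p.1 = j ∧ dIcc p ⊆ Icc u v}.encard : ℝ≥0∞)
      ≤ ((↑W : Set ℤ).encard : ℝ≥0∞) :=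
        ENat.toENNReal_le.2 ((encard_le_encard hsub).trans (encard_image_le _ _))
    _ = ENNReal.ofReal W.card := by
      rw [encard_coe_eq_coe_finsetCard, ENat.toENNReal_coe, ENNReal.ofReal_natCast]
    _ ≤ _ := ENNReal.ofReal_le_ofReal hcard

lemma exists_finset_scales {ℓ R : ℝ} (hℓ : 0 < ℓ) (hR : 1 ≤ R) :
    ∃ J : Finset ℤ, (∀ j, ℓ ≤ R * dLen j → dLen j ≤ ℓ → j ∈ J) ∧
      (J.card : ℝ) ≤ logb 2 R + 1 := by
  have hlogR : 0 ≤ logb 2 R := logb_nonneg one_lt_two hR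
  refine ⟨Finset.Icc ⌈-logb 2 ℓ⌉ ⌊logb 2 R - logb 2 ℓ⌋, fun j h₁ h₂ => ?_, ?_⟩
  · have hj := dLen_pos j
    rw [← logb_le_logb one_lt_two hj hℓ, logb_two_dLen] at h₂
    rw [← logb_le_logb one_lt_two hℓ (by positivity), logb_mul (by positivity) hj.ne',
      logb_two_dLen] at h₁
    rw [Finset.mem_Icc, Int.ceil_le, Int.le_floor]
    constructor <;> linarith
  · have h := card_Icc_ceil_floor_le (α := -logb 2 ℓ) (β := logb 2 R - logb 2 ℓ) (by linarith)
    linarith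

lemma ofReal_sq_tsum_le_encard_mul {ι : Type*} {s : Set ι} (hs : s.Finite) (a : ι → ℝ) :
    ENNReal.ofReal ((∑' i : s, a i) ^ 2) ≤ s.encard * ∑' i : s, ENNReal.ofReal (a i ^ 2) := by
  lift s to Finset ι using hs
  rw [Finset.tsum_subtype', Finset.tsum_subtype' s fun i => ENNReal.ofReal (a i ^ 2),
    encard_coe_eq_coe_finsetCard, ENat.toENNReal_coe,
    ← ENNReal.ofReal_sum_of_nonneg (fun i _ => sq_nonneg (a i)), ← ENNReal.ofReal_natCast,
    ← ENNReal.ofReal_mul (Nat.cast_nonneg _)]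
  exact ENNReal.ofReal_le_ofReal sq_sum_le_card_mul_sum_sq

lemma tsum_tsum_subtype_le_mul {α β : Type*} (S : α → Set β) (f : β → ℝ≥0∞) {m : ℕ}
    (hm : ∀ b, {a | b ∈ S a}.encard ≤ m) :
    ∑' a, ∑' b : S a, f b ≤ m * ∑' b : ⋃ a, S a, f b := by
  have hfiber : ∀ b, ∑' a, (S a).indicator f b ≤ m * (⋃ a, S a).indicator f b := by
    intro b
    by_cases hb : b ∈ ⋃ a, S a
    · rw [indicator_of_mem hb]
      calc ∑' a, (S a).indicator f b = ∑' _ : {a | b ∈ S a}, f b := by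
            rw [tsum_subtype {a | b ∈ S a} fun _ => f b]; rfl
        _ = {a | b ∈ S a}.encard * f b := ENNReal.tsum_set_const _ _
        _ ≤ m * f b := by rw [← ENat.toENNReal_coe]; gcongr; exact hm b
    · simp only [mem_iUnion, not_exists] at hb
      simp [indicator_of_notMem (hb _)]
  calc ∑' a, ∑' b : S a, f b = ∑' a, ∑' b, (S a).indicator f b := by simp_rw [tsum_subtype]
    _ = ∑' b, ∑' a, (S a).indicator f b := ENNReal.tsum_comm
    _ ≤ ∑' b, m * (⋃ a, S a).indicator f b := ENNReal.tsum_le_tsum hfiber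
    _ = m * ∑' b : ⋃ a, S a, f b := by rw [ENNReal.tsum_mul_left, tsum_subtype]

def IsBMOCoeff (a : ℤ × ℤ → ℝ) (B : ℝ) : Prop :=
  ∀ u v : ℝ, u < v → ∑' p : {p : ℤ × ℤ // dIcc p ⊆ Icc u v}, ENNReal.ofReal ((a p.1) ^ 2)
    ≤ ENNReal.ofReal (B ^ 2 * (v - u))

noncomputable def shellCoeff (a : ℤ × ℤ → ℝ) (r : ℝ) (k : ℤ) (p : ℤ × ℤ) : ℝ :=
  ∑' q : rdistShell r p (p.1 + k), a q

lemma ofReal_sq_shellCoeff_le (a : ℤ × ℤ → ℝ) (r : ℝ) (k : ℤ) (p : ℤ × ℤ) :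
    ENNReal.ofReal (shellCoeff a r k p ^ 2) ≤
      (6 * 2 ^ k.toNat : ℕ) * ∑' q : rdistShell r p (p.1 + k), ENNReal.ofReal (a q ^ 2) := by
  have h := encard_rdistShell_le r p (p.1 + k)
  rw [add_sub_cancel_left] at h
  refine (ofReal_sq_tsum_le_encard_mul (finite_of_encard_le_coe h) a).trans ?_
  gcongr
  exact ENat.toENNReal_le.2 h

lemma tsum_ofReal_mul_dLen_le (c : ℝ) (j : ℤ) {u v : ℝ} (huv : u ≤ v) :
    ∑' p : {p : ℤ × ℤ | p.1 = j ∧ dIcc p ⊆ Icc u v}, ENNReal.ofReal (c * dLen p.1.1) ≤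
      ENNReal.ofReal (c * (v - u)) := by
  have hj := dLen_pos j
  calc ∑' p : {p : ℤ × ℤ | p.1 = j ∧ dIcc p ⊆ Icc u v}, ENNReal.ofReal (c * dLen p.1.1)
      = ∑' _ : {p : ℤ × ℤ | p.1 = j ∧ dIcc p ⊆ Icc u v}, ENNReal.ofReal (c * dLen j) :=
        tsum_congr fun p => by rw [p.2.1]
    _ = {p : ℤ × ℤ | p.1 = j ∧ dIcc p ⊆ Icc u v}.encard * ENNReal.ofReal (c * dLen j) :=
        ENNReal.tsum_set_const _ _
    _ ≤ ENNReal.ofReal ((v - u) / dLen j) * ENNReal.ofReal (c * dLen j) := by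
        gcongr; exact encard_dIcc_subset_le j huv
    _ = ENNReal.ofReal (c * (v - u)) := by
        rw [← ENNReal.ofReal_mul (div_nonneg (by linarith) hj.le)]
        congr 1
        field_simp

namespace IsBMOCoeff

variable {a : ℤ × ℤ → ℝ} {B : ℝ}

lemma ofReal_sq_le (ha : IsBMOCoeff a B) (q : ℤ × ℤ) :
    ENNReal.ofReal (a q ^ 2) ≤ ENNReal.ofReal (B ^ 2 * dLen q.1) := by
  have h := ha (dLeft q) (dRight q) (dLeft_lt_dRight q)
  rw [dRight_sub_dLeft] at h
  exact (ENNReal.le_tsum (⟨q, subset_rfl⟩ : {p // dIcc p ⊆ Icc (dLeft q) (dRight q)})).trans h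

lemma ofReal_sq_shellCoeff_le_dLen (ha : IsBMOCoeff a B) (k : ℤ) (r : ℝ) (p : ℤ × ℤ) :
    ENNReal.ofReal (shellCoeff a r k p ^ 2) ≤ ENNReal.ofReal (36 * 2 ^ |k| * B ^ 2 * dLen p.1) := by
  set S := rdistShell r p (p.1 + k)
  set N : ℕ := 6 * 2 ^ k.toNat
  have hN : S.encard ≤ N := by
    simpa only [add_sub_cancel_left] using encard_rdistShell_le r p (p.1 + k)
  calc ENNReal.ofReal (shellCoeff a r k p ^ 2) ≤ N * ∑' q : S, ENNReal.ofReal (a q ^ 2) :=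
        ofReal_sq_shellCoeff_le a r k p
    _ ≤ N * ∑' _ : S, ENNReal.ofReal (B ^ 2 * dLen (p.1 + k)) := by
        gcongr N * ?_
        exact ENNReal.tsum_le_tsum fun q => q.2.1 ▸ ha.ofReal_sq_le q
    _ = N * (S.encard * ENNReal.ofReal (B ^ 2 * dLen (p.1 + k))) := by
        rw [ENNReal.tsum_set_const]
    _ ≤ N * (N * ENNReal.ofReal (B ^ 2 * dLen (p.1 + k))) := by
        gcongr; exact ENat.toENNReal_le.2 hN
    _ = ENNReal.ofReal (36 * 2 ^ |k| * B ^ 2 * dLen p.1) := by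
        rw [← ENNReal.ofReal_natCast, ← ENNReal.ofReal_mul (by positivity),
          ← ENNReal.ofReal_mul (by positivity)]
        congr 1
        push_cast [N]
        linear_combination (36 * B ^ 2) * two_pow_toNat_sq_mul_dLen_add p.1 k

lemma tsum_small_scales_le (ha : IsBMOCoeff a B) (k : ℤ) (r : ℝ) {u v : ℝ} (huv : u < v) :
    ∑' p : {p : ℤ × ℤ | dIcc p ⊆ Icc u v ∧ (r + 1) * max (dLen p.1) (dLen (p.1 + k)) ≤ v - u},
      ENNReal.ofReal (shellCoeff a r k p ^ 2) ≤
        ENNReal.ofReal (108 * 2 ^ |k| * B ^ 2 * (v - u)) := by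
  set Small := {p : ℤ × ℤ | dIcc p ⊆ Icc u v ∧ (r + 1) * max (dLen p.1) (dLen (p.1 + k)) ≤ v - u}
  set N : ℕ := 6 * 2 ^ k.toNat
  set L : ℕ := 6 * 2 ^ (-k).toNat
  have hloc : ⋃ p : Small, rdistShell r p (p.1.1 + k) ⊆
      {q | dIcc q ⊆ Icc (2 * u - v) (2 * v - u)} := by
    refine iUnion_subset fun ⟨p, hpQ, hp⟩ q ⟨hq, _, hlt⟩ => ?_
    obtain ⟨h₁, h₂⟩ := dIcc_subset_Icc_iff.1 hpQ
    rw [← hq] at hp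
    refine (dIcc_subset_of_dRdist_lt hlt).trans (Icc_subset_Icc ?_ ?_) <;>
      linarith [dLeft_lt_dRight p]
  have hmult : ∀ q, {p : Small | q ∈ rdistShell r p (p.1.1 + k)}.encard ≤ L := by
    intro q
    rw [← Subtype.val_injective.encard_image]
    calc _ ≤ {p | q ∈ rdistShell r p (p.1 + k)}.encard :=
          encard_le_encard (by rintro _ ⟨p, hp, rfl⟩; exact hp)
      _ ≤ L := by
          simpa only [setOf_mem_rdistShell, sub_sub_cancel_left] using
            encard_rdistShell_le r q (q.1 - k)
  calc ∑' p : Small, ENNReal.ofReal (shellCoeff a r k p ^ 2)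
      ≤ ∑' p : Small, N * ∑' q : rdistShell r p (p.1.1 + k), ENNReal.ofReal (a q ^ 2) :=
        ENNReal.tsum_le_tsum fun p => ofReal_sq_shellCoeff_le a r k p
    _ = N * ∑' p : Small, ∑' q : rdistShell r p (p.1.1 + k), ENNReal.ofReal (a q ^ 2) :=
        ENNReal.tsum_mul_left
    _ ≤ N * (L * ∑' q : ⋃ p : Small, rdistShell r p (p.1.1 + k), ENNReal.ofReal (a q ^ 2)) := by
        gcongr
        exact tsum_tsum_subtype_le_mul _ (fun q => ENNReal.ofReal (a q ^ 2)) hmult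
    _ ≤ N * (L * ∑' q : {q | dIcc q ⊆ Icc (2 * u - v) (2 * v - u)}, ENNReal.ofReal (a q ^ 2)) := by
        gcongr
        exact ENNReal.tsum_mono_subtype (fun q => ENNReal.ofReal (a q ^ 2)) hloc
    _ ≤ N * (L * ENNReal.ofReal (B ^ 2 * ((2 * v - u) - (2 * u - v)))) := by
        gcongr
        exact ha _ _ (by linarith)
    _ = ENNReal.ofReal (108 * 2 ^ |k| * B ^ 2 * (v - u)) := by
        rw [← ENNReal.ofReal_natCast, ← ENNReal.ofReal_natCast L,
          ← ENNReal.ofReal_mul (by positivity), ← ENNReal.ofReal_mul (by positivity)]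
        congr 1
        push_cast [N, L]
        linear_combination (108 * B ^ 2 * (v - u)) * two_pow_toNat_mul_two_pow_toNat k

lemma tsum_large_scales_le (ha : IsBMOCoeff a B) (k : ℤ) {r : ℝ} (hr : 0 ≤ r) {u v : ℝ}
    (huv : u < v) :
    ∑' p : {p : ℤ × ℤ | dIcc p ⊆ Icc u v ∧ v - u < (r + 1) * max (dLen p.1) (dLen (p.1 + k))},
      ENNReal.ofReal (shellCoeff a r k p ^ 2) ≤
        ENNReal.ofReal
          ((logb 2 ((r + 1) * 2 ^ (-k).toNat) + 1) * (36 * 2 ^ |k| * B ^ 2 * (v - u))) := by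
  set Large := {p : ℤ × ℤ | dIcc p ⊆ Icc u v ∧ v - u < (r + 1) * max (dLen p.1) (dLen (p.1 + k))}
  set c : ℝ := 36 * 2 ^ |k| * B ^ 2
  obtain ⟨J, hJ, hcard⟩ := exists_finset_scales (sub_pos.2 huv) (R := (r + 1) * 2 ^ (-k).toNat)
    (one_le_mul_of_one_le_of_one_le (by linarith) (one_le_pow₀ one_le_two))
  set Scale : ℤ → Set (ℤ × ℤ) := fun j => {p | p.1 = j ∧ dIcc p ⊆ Icc u v}
  have hscales : Large ⊆ ⋃ j ∈ J, Scale j := by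
    rintro p ⟨hpQ, hp⟩
    obtain ⟨h₁, h₂⟩ := dIcc_subset_Icc_iff.1 hpQ
    rw [max_dLen_dLen_add, ← mul_assoc] at hp
    exact mem_biUnion (hJ p.1 hp.le (by linarith [dRight_sub_dLeft p])) ⟨rfl, hpQ⟩
  set g : ℤ × ℤ → ℝ≥0∞ := fun p => ENNReal.ofReal (c * dLen p.1)
  calc ∑' p : Large, ENNReal.ofReal (shellCoeff a r k p ^ 2)
      ≤ ∑' p : Large, g p := ENNReal.tsum_le_tsum fun p => ha.ofReal_sq_shellCoeff_le_dLen k r p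
    _ ≤ ∑' p : ⋃ j ∈ J, Scale j, g p := ENNReal.tsum_mono_subtype g hscales
    _ ≤ ∑ j ∈ J, ∑' p : Scale j, g p := ENNReal.tsum_biUnion_le g J Scale
    _ ≤ ∑ _j ∈ J, ENNReal.ofReal (c * (v - u)) :=
        Finset.sum_le_sum fun j _ => tsum_ofReal_mul_dLen_le c j huv.le
    _ = J.card * ENNReal.ofReal (c * (v - u)) := by rw [Finset.sum_const, nsmul_eq_mul]
    _ ≤ ENNReal.ofReal (logb 2 ((r + 1) * 2 ^ (-k).toNat) + 1) *
          ENNReal.ofReal (c * (v - u)) := by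
        rw [← ENNReal.ofReal_natCast]
        gcongr
    _ = _ := (ENNReal.ofReal_mul ((Nat.cast_nonneg _).trans hcard)).symm

end IsBMOCoeff

/-- Wavelet coefficient form of the key martingale transform estimate: if the coefficients
`a` of `f` satisfy the BMO condition with constant `B`, then for every interval `Q = [u,v]`,
`Σ_{I ⊆ Q} |Σ_{J ∈ I_{k,n}} a_J|² ≲ 2^{|k|}(log₂(n+1) + max(-k,0) + 1) B² |Q|`,
with an absolute implicit constant. -/
theorem stmt5 :
    ∃ C : ℝ, 0 < C ∧
      ∀ (a : ℤ × ℤ → ℝ) (B : ℝ) (k : ℤ) (n : ℕ), 1 ≤ n → 0 ≤ B →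
        (∀ u v : ℝ, u < v →
          ∑' p : {p : ℤ × ℤ // dIcc p ⊆ Set.Icc u v}, ENNReal.ofReal ((a p.1) ^ 2)
            ≤ ENNReal.ofReal (B ^ 2 * (v - u))) →
        ∀ u v : ℝ, u < v →
          ∑' p : {p : ℤ × ℤ // dIcc p ⊆ Set.Icc u v},
              ENNReal.ofReal
                ((∑' q : {q : ℤ × ℤ // q.1 = p.1.1 + k ∧ (n : ℝ) ≤ dRdist p.1 q ∧
                    dRdist p.1 q < (n : ℝ) + 1}, a q) ^ 2)
            ≤ ENNReal.ofReal
                (C * (2 : ℝ) ^ |k| * (Real.logb 2 ((n : ℝ) + 1) + ((max (-k) 0 : ℤ) : ℝ) + 1)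
                  * B ^ 2 * (v - u)) := by
  refine ⟨144, by norm_num, fun a B k n _ _ (ha : IsBMOCoeff a B) u v huv => ?_⟩
  have hsplit : {p : ℤ × ℤ | dIcc p ⊆ Icc u v} ⊆
      {p | dIcc p ⊆ Icc u v ∧ ((n : ℝ) + 1) * max (dLen p.1) (dLen (p.1 + k)) ≤ v - u} ∪
        {p | dIcc p ⊆ Icc u v ∧ v - u < ((n : ℝ) + 1) * max (dLen p.1) (dLen (p.1 + k))} :=
    fun p hp => (le_or_gt _ _).imp (⟨hp, ·⟩) (⟨hp, ·⟩)
  have hlog : logb 2 (((n : ℝ) + 1) * 2 ^ (-k).toNat) =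
      logb 2 ((n : ℝ) + 1) + ((max (-k) 0 : ℤ) : ℝ) := by
    rw [logb_mul (by positivity) (by positivity), logb_pow, logb_self_eq_one one_lt_two,
      mul_one, ← Int.toNat_eq_max, Int.cast_natCast]
  have hY : 0 ≤ logb 2 ((n : ℝ) + 1) + ((max (-k) 0 : ℤ) : ℝ) := by
    rw [← hlog]
    exact logb_nonneg one_lt_two
      (one_le_mul_of_one_le_of_one_le (by simp) (one_le_pow₀ one_le_two))
  have hX : 0 ≤ 2 ^ |k| * B ^ 2 * (v - u) := by have := huv.le; positivity
  set f : ℤ × ℤ → ℝ≥0∞ := fun p => ENNReal.ofReal (shellCoeff a n k p ^ 2)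
  calc ∑' p : {p : ℤ × ℤ | dIcc p ⊆ Icc u v}, f p
      ≤ _ := (ENNReal.tsum_mono_subtype f hsplit).trans (ENNReal.tsum_union_le f _ _)
    _ ≤ ENNReal.ofReal (108 * 2 ^ |k| * B ^ 2 * (v - u)) + ENNReal.ofReal
          ((logb 2 (((n : ℝ) + 1) * 2 ^ (-k).toNat) + 1) * (36 * 2 ^ |k| * B ^ 2 * (v - u))) :=
        add_le_add (ha.tsum_small_scales_le k n huv)
        (ha.tsum_large_scales_le k n.cast_nonneg huv)
    _ ≤ _ := by
      rw [hlog, ← ENNReal.ofReal_add (by positivity) (by positivity)]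
      exact ENNReal.ofReal_le_ofReal (by nlinarith [mul_nonneg hY hX])
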